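/- arXiv:2304.10169 — 3 statements merged into one kernel-verified Lean document; each statement's English description precedes it below -/
import Mathlib

section
/- For natural numbers n and m with m > n, the sum over ℓ from 1 to n of the ratio (n(n-1)⋯(n-ℓ+1))/(m(m-1)⋯(m-ℓ+1)) of falling factorials equals n/(m-n+1). -/
/-!
With `t ℓ = n.descFactorial ℓ / m.descFactorial ℓ` we have `(m - ℓ) t (ℓ + 1) = (n - ℓ) t ℓ`, i.e.
`(m - n + 1) t (ℓ + 1) = (n - ℓ) t ℓ - (n - ℓ - 1) t (ℓ + 1)`. So `(m - n + 1) ∑ t` telescopes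
to `n t 0 - 0 t n = n`.
-/

open Finset Nat

section
variable {K : Type*} [Field K] [CharZero K]

theorem cast_factorial_div_factorial_sub {n k : ℕ} (hk : k ≤ n) :
    (n ! : K) / (n - k)! = n.descFactorial k := by
  rw [div_eq_iff (Nat.cast_ne_zero.mpr (factorial_ne_zero _)), ← factorial_mul_descFactorial hk]
  push_cast
  ring

theorem factorial_div_mul_factorial_div_eq_descFactorial_div {n m k : ℕ} (hkn : k ≤ n)
    (hkm : k ≤ m) :
    (n ! : K) / (n - k)! * ((m - k)! / m !) = n.descFactorial k / m.descFactorial k := by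
  rw [← inv_div (m ! : K), cast_factorial_div_factorial_sub hkn,
    cast_factorial_div_factorial_sub hkm, div_eq_mul_inv]

theorem sub_mul_descFactorial_div_descFactorial_succ {n m k : ℕ} (hk : k < m) :
    ((m - k : ℕ) : K) * ((n.descFactorial (k + 1) : K) / m.descFactorial (k + 1)) =
      (n - k : ℕ) * ((n.descFactorial k : K) / m.descFactorial k) := by
  have hm : ((m - k : ℕ) : K) ≠ 0 := by exact_mod_cast (Nat.sub_pos_of_lt hk).ne'
  rw [descFactorial_succ n k, descFactorial_succ m k]
  push_cast
  field_simp

theorem mul_sum_range_descFactorial_div_descFactorial {n m k : ℕ} (hkn : k ≤ n) (hnm : n ≤ m) :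
    ((m : K) - n + 1) * ∑ ℓ ∈ range k, (n.descFactorial (ℓ + 1) : K) / m.descFactorial (ℓ + 1) =
      n - (n - k : ℕ) * ((n.descFactorial k : K) / m.descFactorial k) := by
  induction k with
  | zero => simp
  | succ k ih =>
    have step := sub_mul_descFactorial_div_descFactorial_succ (K := K) (n := n) (by omega : k < m)
    rw [sum_range_succ, mul_add, ih (by omega)]
    push_cast [Nat.sub_add_comm hkn, Nat.cast_sub (by omega : k ≤ m),
      Nat.cast_sub (by omega : k + 1 ≤ n), Nat.cast_sub (by omega : k ≤ n)] at step ⊢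
    linear_combination step

theorem sum_range_descFactorial_div_descFactorial {n m : ℕ} (hnm : n ≤ m) :
    ∑ ℓ ∈ range n, (n.descFactorial (ℓ + 1) : K) / m.descFactorial (ℓ + 1) = n / (m - n + 1) := by
  have hpos : (m : K) - n + 1 ≠ 0 := by
    simpa [Nat.cast_sub hnm] using (Nat.cast_ne_zero (R := K)).mpr (succ_ne_zero (m - n))
  rw [eq_div_iff hpos, mul_comm, mul_sum_range_descFactorial_div_descFactorial le_rfl hnm]
  simp

end

/-- Falling factorial sum identity: for `m > n`,
`∑_{ℓ=1}^{n} (n!/(n-ℓ)!)·((m-ℓ)!/m!) = n/(m-n+1)`. -/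
theorem falling_factorial_sum (n m : ℕ) (h : m > n) :
    ∑ ℓ ∈ Finset.Icc 1 n,
      ((n.factorial : ℝ) / ((n - ℓ).factorial : ℝ)) *
        (((m - ℓ).factorial : ℝ) / (m.factorial : ℝ))
      = (n : ℝ) / ((m : ℝ) - (n : ℝ) + 1) := by
  rw [← sum_range_descFactorial_div_descFactorial h.le, ← Ico_add_one_right_eq_Icc,
    sum_Ico_eq_sum_range, Nat.add_sub_cancel]
  refine sum_congr rfl fun ℓ hℓ => ?_
  have hℓn : ℓ + 1 ≤ n := mem_range.mp hℓ
  rw [add_comm 1 ℓ, factorial_div_mul_factorial_div_eq_descFactorial_div hℓn (by omega)]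
end

section
/- Let (X_t, Y_t) be the ARW particle-count chain on the complete graph with N+1 vertices and sleep rate λ>0. Given X_t = x, Y_t = y with 0 ≤ y ≤ x ≤ N, the conditional expectation of the one-step increment of S_t := Y_t − (1+λ)X_t + λN equals −λ/(1+λ) + (λ/(1+λ))·((N+1)/N)·(1/(N+2−x)) + (1/(1+λ))·((N+1)/N)·(x−y)/(N+3−x). -/
/-! Write `P k = ∏_{i<k} (m - i)/(M - i)` with `m = x - y`, `M = N + 2 - y`, so that
`Π_k^{(-1)}` and `Π_k^{(0)}` (for `k ≥ 1`) are constant multiples of `P k`, and `P` vanishes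
beyond `m`. Both sums are then first moments `∑ k (P k - P (k+1)) = ∑_{k=1}^m P k`, and the
falling-factorial sum telescopes: `∑_{k=1}^m P k = m / (M + 1 - m)`, which with
`M + 1 - m = N + 3 - x` gives the last term of the drift. -/

open Finset

/-- `Π_k^{(0)}(x,y)`: probability that `ΔY ≥ k` and `ΔX = 0` for the ARW particle-count
chain on the complete graph with `N+1` vertices and sleep rate `lam`. -/
noncomputable def PiZero (N x y : ℕ) (lam : ℝ) (k : ℕ) : ℝ :=
  if k = 0 then
    (1 / (1 + lam)) * (((N : ℝ) + 1) / (N : ℝ)) *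
      (((N : ℝ) + 1 - (x : ℝ)) / ((N : ℝ) + 2 - (x : ℝ)))
    - (1 / (1 + lam)) * (1 / (N : ℝ))
  else
    (1 / (1 + lam)) * (((N : ℝ) + 1) / (N : ℝ)) *
      (∏ i ∈ Finset.range k, (((x : ℝ) - (y : ℝ) - (i : ℝ)) / ((N : ℝ) + 2 - (y : ℝ) - (i : ℝ)))) *
      (((N : ℝ) + 1 - (x : ℝ)) / ((N : ℝ) + 2 - (x : ℝ)))

/-- `Π_k^{(-1)}(x,y)`: probability that `ΔY ≥ k - 1` and `ΔX = -1` for the ARW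
particle-count chain. -/
noncomputable def PiMinus (N x y : ℕ) (lam : ℝ) (k : ℕ) : ℝ :=
  (1 / (1 + lam)) * (((N : ℝ) + 1) / (N : ℝ)) *
    (∏ i ∈ Finset.range k, (((x : ℝ) - (y : ℝ) - (i : ℝ)) / ((N : ℝ) + 2 - (y : ℝ) - (i : ℝ)))) *
    (1 / ((N : ℝ) + 2 - (x : ℝ)))

/-- `π_k^{(0)} = P(ΔY = k, ΔX = 0)` for `k ≥ 0`. -/
noncomputable def piZero (N x y : ℕ) (lam : ℝ) (k : ℕ) : ℝ :=
  PiZero N x y lam k - PiZero N x y lam (k + 1)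

/-- `π_k^{(-1)} = P(ΔY = k - 1, ΔX = -1)` for `k ≥ 0`. -/
noncomputable def piMinus (N x y : ℕ) (lam : ℝ) (k : ℕ) : ℝ :=
  PiMinus N x y lam k - PiMinus N x y lam (k + 1)

noncomputable def fallingRatio (a M : ℝ) (k : ℕ) : ℝ :=
  ∏ i ∈ range k, (a - i) / (M - i)

@[simp]
theorem fallingRatio_zero (a M : ℝ) : fallingRatio a M 0 = 1 := prod_range_zero _

theorem fallingRatio_succ (a M : ℝ) (k : ℕ) :
    fallingRatio a M (k + 1) = fallingRatio a M k * ((a - k) / (M - k)) :=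
  prod_range_succ _ k

theorem fallingRatio_natCast_eq_zero (m : ℕ) (M : ℝ) {k : ℕ} (hk : m < k) :
    fallingRatio m M k = 0 :=
  prod_eq_zero (mem_range.2 hk) (by simp)

theorem sum_range_fallingRatio_succ (m : ℕ) (M : ℝ) (hM : (m : ℝ) < M + 1) :
    ∑ k ∈ range m, fallingRatio m M (k + 1) = m / (M + 1 - m) := by
  have hM' : M + 1 - m ≠ 0 := by linarith
  -- `P (k+1) = f k - f (k+1)` as `(m - k) (1 - (m - k - 1)/(M - k)) = (m - k) (M + 1 - m)/(M - k)`
  set f : ℕ → ℝ := fun k => fallingRatio m M k * (m - k) / (M + 1 - m) with hf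
  have step : ∀ k ∈ range m, fallingRatio m M (k + 1) = f k - f (k + 1) := by
    intro k hk
    have hkm : (k : ℝ) + 1 ≤ m := by exact_mod_cast mem_range.1 hk
    have hMk : M - k ≠ 0 := by linarith
    simp only [hf, fallingRatio_succ]
    push_cast
    field_simp
    ring
  rw [sum_congr rfl step, sum_range_sub']
  simp [hf]

theorem sum_range_fallingRatio_sub_succ (m : ℕ) (M : ℝ) :
    ∑ k ∈ range (m + 1), (fallingRatio m M k - fallingRatio m M (k + 1)) = 1 := by
  rw [sum_range_sub', fallingRatio_zero, fallingRatio_natCast_eq_zero m M (Nat.lt_succ_self m),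
    sub_zero]

theorem sum_range_natCast_mul_sub_succ {R : Type*} [CommRing R] (f : ℕ → R) (n : ℕ) :
    ∑ k ∈ range n, (k : R) * (f k - f (k + 1)) = ∑ k ∈ range n, f (k + 1) - n * f n := by
  induction n with
  | zero => simp
  | succ n ih =>
    rw [sum_range_succ, ih, sum_range_succ]
    push_cast
    ring

theorem sum_range_natCast_mul_fallingRatio_sub_succ (m : ℕ) (M : ℝ) (hM : (m : ℝ) < M + 1) :
    ∑ k ∈ range (m + 1), (k : ℝ) * (fallingRatio m M k - fallingRatio m M (k + 1))
      = m / (M + 1 - m) := by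
  rw [sum_range_natCast_mul_sub_succ, sum_range_succ, sum_range_fallingRatio_succ m M hM,
    fallingRatio_natCast_eq_zero m M (Nat.lt_succ_self m)]
  ring

section ParticleCountChain

variable (N x y : ℕ) (lam : ℝ)

theorem piMinus_eq (k : ℕ) :
    piMinus N x y lam k = (1 / (1 + lam)) * ((N + 1) / N) * (1 / (N + 2 - x)) *
      (fallingRatio ((x : ℝ) - y) (N + 2 - y) k
        - fallingRatio ((x : ℝ) - y) (N + 2 - y) (k + 1)) := by
  simp only [piMinus, PiMinus, fallingRatio]
  ring

theorem natCast_mul_piZero (k : ℕ) :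
    (k : ℝ) * piZero N x y lam k = (1 / (1 + lam)) * ((N + 1) / N) * ((N + 1 - x) / (N + 2 - x)) *
      ((k : ℝ) * (fallingRatio ((x : ℝ) - y) (N + 2 - y) k
        - fallingRatio ((x : ℝ) - y) (N + 2 - y) (k + 1))) := by
  rcases k with _ | k
  · simp
  · simp only [piZero, PiZero, fallingRatio, Nat.succ_ne_zero, if_false]
    ring

variable {N x y}

theorem sum_natCast_mul_fallingRatio_sub_succ_of_le (hyx : y ≤ x) (hxN : x ≤ N) :
    ∑ k ∈ range (x - y + 1), (k : ℝ) * (fallingRatio ((x : ℝ) - y) (N + 2 - y) k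
        - fallingRatio ((x : ℝ) - y) (N + 2 - y) (k + 1))
      = ((x : ℝ) - y) / (N + 3 - x) := by
  have hxN' : (x : ℝ) ≤ N := by exact_mod_cast hxN
  rw [← Nat.cast_sub hyx, sum_range_natCast_mul_fallingRatio_sub_succ]
  · rw [Nat.cast_sub hyx]; ring_nf
  · rw [Nat.cast_sub hyx]; linarith

theorem sum_lam_add_mul_piMinus (hyx : y ≤ x) (hxN : x ≤ N) :
    ∑ k ∈ range (x - y + 1), (lam + k) * piMinus N x y lam k
      = (1 / (1 + lam)) * ((N + 1) / N) * (1 / (N + 2 - x)) *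
        (lam + ((x : ℝ) - y) / (N + 3 - x)) := by
  set P := fallingRatio ((x : ℝ) - y) (N + 2 - y)
  have htelescope : ∑ k ∈ range (x - y + 1), (P k - P (k + 1)) = 1 := by
    simp only [P]
    rw [← Nat.cast_sub hyx]
    exact sum_range_fallingRatio_sub_succ _ _
  calc ∑ k ∈ range (x - y + 1), (lam + k) * piMinus N x y lam k
      = (1 / (1 + lam)) * ((N + 1) / N) * (1 / (N + 2 - x)) *
          (lam * ∑ k ∈ range (x - y + 1), (P k - P (k + 1))
            + ∑ k ∈ range (x - y + 1), (k : ℝ) * (P k - P (k + 1))) := by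
        rw [mul_sum, ← sum_add_distrib, mul_sum]
        refine sum_congr rfl fun k _ => ?_
        rw [piMinus_eq]
        ring
    _ = _ := by rw [htelescope, sum_natCast_mul_fallingRatio_sub_succ_of_le hyx hxN]; ring

theorem sum_natCast_mul_piZero (hyx : y ≤ x) (hxN : x ≤ N) :
    ∑ k ∈ range (x - y + 1), (k : ℝ) * piZero N x y lam k
      = (1 / (1 + lam)) * ((N + 1) / N) * ((N + 1 - x) / (N + 2 - x)) *
        (((x : ℝ) - y) / (N + 3 - x)) := by
  rw [← sum_natCast_mul_fallingRatio_sub_succ_of_le hyx hxN, mul_sum]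
  exact sum_congr rfl fun k _ => natCast_mul_piZero N x y lam k

end ParticleCountChain

theorem ARW_drift_identity_general (N x y : ℕ) (lam : ℝ)
    (hyx : y ≤ x) (hxN : x ≤ N) :
    (-1) * (lam / (1 + lam))
      + (∑ k ∈ Finset.range (x - y + 1), (lam + (k : ℝ)) * piMinus N x y lam k)
      + (∑ k ∈ Finset.range (x - y + 1), (k : ℝ) * piZero N x y lam k)
    = - lam / (1 + lam)
      + (lam / (1 + lam)) * (((N : ℝ) + 1) / (N : ℝ)) * (1 / ((N : ℝ) + 2 - (x : ℝ)))
      + (1 / (1 + lam)) * (((N : ℝ) + 1) / (N : ℝ)) *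
          (((x : ℝ) - (y : ℝ)) / ((N : ℝ) + 3 - (x : ℝ))) := by
  have hD : (N : ℝ) + 2 - x ≠ 0 := by
    have : (x : ℝ) ≤ N := by exact_mod_cast hxN
    linarith
  have hsplit : 1 / ((N : ℝ) + 2 - x) + ((N : ℝ) + 1 - x) / (N + 2 - x) = 1 := by
    field_simp
    ring
  rw [sum_lam_add_mul_piMinus lam hyx hxN, sum_natCast_mul_piZero lam hyx hxN]
  linear_combination (1 / (1 + lam)) * ((N + 1) / N) * (((x : ℝ) - y) / (N + 3 - x)) * hsplit

/-- Conditional expectation of the one-step increment of `S_t = Y_t - (1+λ)X_t + λN`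
for the ARW particle-count chain, given `X_t = x`, `Y_t = y`: the increment equals
`λ + k` with probability `π_k^{(-1)}`, `k` with probability `π_k^{(0)}` (`k ≥ 0`), and
`-1` with probability `π_{-1}^{(0)} = λ/(1+λ)`. -/
theorem ARW_drift_identity (N x y : ℕ) (lam : ℝ) (hlam : 0 < lam)
    (hN : 1 ≤ N) (hyx : y ≤ x) (hxN : x ≤ N) :
    (-1) * (lam / (1 + lam))
      + (∑ k ∈ Finset.range (x - y + 1), (lam + (k : ℝ)) * piMinus N x y lam k)
      + (∑ k ∈ Finset.range (x - y + 1), (k : ℝ) * piZero N x y lam k)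
    = - lam / (1 + lam)
      + (lam / (1 + lam)) * (((N : ℝ) + 1) / (N : ℝ)) * (1 / ((N : ℝ) + 2 - (x : ℝ)))
      + (1 / (1 + lam)) * (((N : ℝ) + 1) / (N : ℝ)) *
          (((x : ℝ) - (y : ℝ)) / ((N : ℝ) + 3 - (x : ℝ))) :=
  ARW_drift_identity_general N x y lam hyx hxN
end

section
/- For a birth-and-death chain on {−K−1, …, K⁺+1} with ratio of down-to-up probabilities at site k equal to exp(w_k) where w_k = (1/λ)(k+3/2)N^{−1/4} (up to uniformly small multiplicative corrections e^{O(MN^{−3/8})}), the effective resistance from −K−1 to K⁺+1 satisfies R = Θ(1)·(N^{1/8}/(K⁺N^{−1/8}))·exp((1/(2λ))(K⁺N^{−1/8})²·(1+o(1))) when K⁺·N^{−1/8} → ∞, via comparison of the Riemann sum ∑_p N^{−1/8}exp((1/(2λ))(pN^{−1/8})(pN^{−1/8}+1)) with the integral ∫ exp((1/(2λ))x(x+1))dx and the substitution y = (x+1/2)/√(2λ) reducing it to ∫e^{y²}dy ∼ e^{L²}/(2L). -/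
/-!
Write `ν = n^{-1/8}` for the lattice spacing and `L = K⁺ν`. Instead of comparing the sum with
`∫ exp(x(x+1)/(2λ)) dx`, it suffices to count terms: the last `⌊1/(νL)⌋ + 1` sites have
`x = pν ≥ L - 1/L`, so each contributes at least `exp(L²/(2λ) - O(1))`, while all
`K⁻ + K⁺ + 2 ≤ 4L²/(νL)` terms are at most `exp(L(L+1)/(2λ) + O(1))`. Hence
`log (R νL) = L²/(2λ) + O(L)`, and `ε` can be chosen so that `R = (1/(νL)) exp(L²(1+ε)/(2λ))`
holds exactly.
-/

open Filter Finset Real Asymptotics Topology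

theorem sq_sub_two_le_mul_add_one {L x : ℝ} (hL : 1 ≤ L) (hx : L - 1 / L ≤ x) :
    L ^ 2 - 2 ≤ x * (x + 1) := by
  have hL' : 0 < L := by linarith
  have h1 : 0 ≤ L - 1 / L := by
    rw [sub_nonneg, div_le_iff₀ hL']; nlinarith
  have h2 : (L - 1 / L) ^ 2 = L ^ 2 - 2 + (1 / L) ^ 2 := by field_simp; ring
  nlinarith [pow_le_pow_left₀ h1 hx 2, sq_nonneg (1 / L)]

theorem mul_add_one_le_mul_add_one {L x : ℝ} (hL : 1 ≤ L) (h2 : -2 ≤ x) (hx : x ≤ L) :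
    x * (x + 1) ≤ L * (L + 1) := by
  nlinarith

theorem sq_le_exp_two_mul {x : ℝ} (hx : 0 ≤ x) : x ^ 2 ≤ exp (2 * x) := by
  rw [mul_comm, exp_mul, rpow_two]
  exact pow_le_pow_left₀ hx (by linarith [add_one_le_exp x]) 2

theorem isLittleO_affine_sq_atTop (c d : ℝ) :
    (fun t : ℝ => c + d * t) =o[atTop] fun t => t ^ 2 := by
  have h0 := (isLittleO_pow_pow_atTop_of_lt (𝕜 := ℝ) (p := 0) (q := 2) two_pos).const_mul_left c
  have h1 := (isLittleO_pow_pow_atTop_of_lt (𝕜 := ℝ) (p := 1) (q := 2) one_lt_two).const_mul_left d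
  simpa using h0.add h1

theorem exists_tendsto_zero_eq_mul_exp {α : Type*} {l : Filter α} {a : ℝ} (ha : a ≠ 0)
    {R A L : α → ℝ} (hR : ∀ᶠ x in l, 0 < R x) (hA : ∀ᶠ x in l, 0 < A x)
    (hL : ∀ᶠ x in l, L x ≠ 0)
    (h : (fun x => log (R x / A x) - a * L x ^ 2) =o[l] fun x => L x ^ 2) :
    ∃ ε : α → ℝ, Tendsto ε l (𝓝 0) ∧
      ∀ᶠ x in l, R x = A x * exp (a * L x ^ 2 * (1 + ε x)) := by
  refine ⟨fun x => log (R x / A x) / (a * L x ^ 2) - 1, ?_, ?_⟩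
  · have := h.tendsto_div_nhds_zero.const_mul a⁻¹
    rw [mul_zero] at this
    refine this.congr' (hL.mono fun x hx => ?_)
    field_simp
  · filter_upwards [hR, hA, hL] with x hRx hAx hLx
    rw [add_sub_cancel, mul_div_cancel₀ _ (by positivity), exp_log (div_pos hRx hAx),
      mul_div_cancel₀ _ hAx.ne']

/-- With `ν = N^{-1/8}`, the summand is the resistance `r(p, p+1)` of the chain. -/
noncomputable def resistanceSum (lam ν : ℝ) (B : ℤ → ℝ) (a b : ℤ) : ℝ :=
  ∑ p ∈ Icc a b, exp (1 / (2 * lam) * (p * ν) * (p * ν + 1) + B p)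

section resistanceSum

variable {lam ν b : ℝ} {B : ℤ → ℝ}

theorem resistanceSum_pos (a c : ℤ) (h : a ≤ c) : 0 < resistanceSum lam ν B a c :=
  sum_pos (fun _ _ => exp_pos _) (nonempty_Icc.mpr h)

theorem one_div_mul_exp_le_resistanceSum (hlam : 0 < lam) (hν : 0 < ν) {a : ℤ} (ha : a ≤ 0)
    {K : ℕ} (hL : 1 ≤ K * ν) (hB : ∀ p, -b ≤ B p) :
    1 / (ν * (K * ν)) * exp ((K * ν) ^ 2 / (2 * lam) - 1 / lam - b) ≤
      resistanceSum lam ν B a K := by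
  set L : ℝ := K * ν
  have hL0 : 0 < L := by linarith
  set m : ℕ := ⌊1 / (ν * L)⌋₊
  have hm : 1 / (ν * L) < m + 1 := Nat.lt_floor_add_one _
  have hmν : m * ν ≤ 1 / L := by
    calc m * ν ≤ 1 / (ν * L) * ν := by gcongr; exact Nat.floor_le (by positivity)
      _ = 1 / L := by field_simp
  have hmK : m ≤ K := by
    have : (m : ℝ) ≤ K := by
      calc (m : ℝ) = m * ν / ν := by field_simp
        _ ≤ 1 / L / ν := by gcongr
        _ ≤ L / ν := by gcongr; rw [div_le_iff₀ hL0]; nlinarith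
        _ = K := by simp only [L]; field_simp
    exact_mod_cast this
  have hterm : ∀ p ∈ Icc ((K : ℤ) - m) K,
      exp (L ^ 2 / (2 * lam) - 1 / lam - b) ≤ exp (1 / (2 * lam) * (p * ν) * (p * ν + 1) + B p) := by
    intro p hp
    have hp' : (K : ℝ) - m ≤ p := by exact_mod_cast (mem_Icc.mp hp).1
    have hx : L - 1 / L ≤ p * ν := by nlinarith
    rw [exp_le_exp]
    calc L ^ 2 / (2 * lam) - 1 / lam - b = (L ^ 2 - 2) / (2 * lam) + -b := by field_simp; ring
      _ ≤ p * ν * (p * ν + 1) / (2 * lam) + B p := by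
        gcongr
        exacts [sq_sub_two_le_mul_add_one hL hx, hB p]
      _ = _ := by ring
  have hcard : #(Icc ((K : ℤ) - m) K) = m + 1 := by rw [Int.card_Icc]; omega
  calc 1 / (ν * L) * exp (L ^ 2 / (2 * lam) - 1 / lam - b)
      ≤ (m + 1) * exp (L ^ 2 / (2 * lam) - 1 / lam - b) :=
        mul_le_mul_of_nonneg_right hm.le (exp_pos _).le
    _ = #(Icc ((K : ℤ) - m) K) • exp (L ^ 2 / (2 * lam) - 1 / lam - b) := by
      rw [hcard, nsmul_eq_mul]; push_cast; ring
    _ ≤ ∑ p ∈ Icc ((K : ℤ) - m) K, exp (1 / (2 * lam) * (p * ν) * (p * ν + 1) + B p) :=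
      card_nsmul_le_sum _ _ _ hterm
    _ ≤ resistanceSum lam ν B a K :=
      sum_le_sum_of_subset_of_nonneg (Icc_subset_Icc (by omega) le_rfl)
        (fun _ _ _ => (exp_pos _).le)

theorem resistanceSum_le (hlam : 0 < lam) (hν : 0 < ν) (hν1 : ν ≤ 1) {Km K : ℕ}
    (hKm : (Km : ℝ) ≤ ν⁻¹) (hL : 1 ≤ K * ν) (hB : ∀ p, B p ≤ b) :
    resistanceSum lam ν B (-(Km : ℤ) - 1) K ≤
      (Km + K + 2) * exp (K * ν * (K * ν + 1) / (2 * lam) + b) := by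
  have hKmν : Km * ν ≤ 1 := by rwa [← le_div_iff₀ hν, one_div]
  have hterm : ∀ p ∈ Icc (-(Km : ℤ) - 1) K,
      exp (1 / (2 * lam) * (p * ν) * (p * ν + 1) + B p) ≤
        exp (K * ν * (K * ν + 1) / (2 * lam) + b) := by
    intro p hp
    have hlo : -(Km : ℝ) - 1 ≤ p := by exact_mod_cast (mem_Icc.mp hp).1
    have hhi : (p : ℝ) ≤ K := by exact_mod_cast (mem_Icc.mp hp).2
    have hq := mul_add_one_le_mul_add_one hL (x := p * ν) (by nlinarith) (by nlinarith)
    rw [exp_le_exp]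
    calc 1 / (2 * lam) * (p * ν) * (p * ν + 1) + B p = p * ν * (p * ν + 1) / (2 * lam) + B p := by
          ring
      _ ≤ _ := by gcongr; exact hB p
  have hcard : (#(Icc (-(Km : ℤ) - 1) K) : ℝ) = Km + K + 2 := by
    rw [Int.card_Icc, show (K + 1 - (-(Km : ℤ) - 1)).toNat = Km + K + 2 by omega]
    push_cast; ring
  calc resistanceSum lam ν B (-(Km : ℤ) - 1) K
      ≤ #(Icc (-(Km : ℤ) - 1) K) • exp (K * ν * (K * ν + 1) / (2 * lam) + b) :=
        sum_le_card_nsmul _ _ _ hterm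
    _ = (Km + K + 2) * exp (K * ν * (K * ν + 1) / (2 * lam) + b) := by
      rw [nsmul_eq_mul, hcard]

theorem abs_log_resistanceSum_div_sub_le (hlam : 0 < lam) (hν : 0 < ν) (hν1 : ν ≤ 1) {Km K : ℕ}
    (hKm : (Km : ℝ) ≤ ν⁻¹) (hL : 1 ≤ K * ν) (hB : ∀ p, |B p| ≤ b) :
    |log (resistanceSum lam ν B (-(Km : ℤ) - 1) K / (ν⁻¹ / (K * ν))) - 1 / (2 * lam) * (K * ν) ^ 2|
      ≤ 1 / lam + b + (1 / (2 * lam) + 4) * (K * ν) := by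
  set L : ℝ := K * ν
  set S := resistanceSum lam ν B (-(Km : ℤ) - 1) K
  have hL0 : 0 < L := by linarith
  have hS : 0 < S := resistanceSum_pos _ _ (by omega)
  have hA : ν⁻¹ / L = 1 / (ν * L) := by field_simp
  have hlo : L ^ 2 / (2 * lam) - 1 / lam - b ≤ log (S / (ν⁻¹ / L)) := by
    rw [le_log_iff_exp_le (by positivity), hA, le_div_iff₀' (by positivity)]
    exact one_div_mul_exp_le_resistanceSum hlam hν (by omega) hL fun p => neg_le_of_abs_le (hB p)
  have hhi : log (S / (ν⁻¹ / L)) ≤ 4 * L + L * (L + 1) / (2 * lam) + b := by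
    rw [log_le_iff_le_exp (by positivity), add_assoc, exp_add, hA, div_le_iff₀' (by positivity)]
    have hcount : (Km + K + 2) * ν * L ≤ (2 * L) ^ 2 := by
      have : (Km : ℝ) * ν ≤ 1 := by rwa [← le_div_iff₀ hν, one_div]
      nlinarith
    calc S ≤ (Km + K + 2) * exp (L * (L + 1) / (2 * lam) + b) :=
          resistanceSum_le hlam hν hν1 hKm hL fun p => le_of_abs_le (hB p)
      _ ≤ 1 / (ν * L) * (exp (2 * (2 * L)) * exp (L * (L + 1) / (2 * lam) + b)) := by
        rw [← mul_assoc]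
        gcongr
        calc (Km + K + 2 : ℝ) = (Km + K + 2) * ν * L / (ν * L) := by field_simp
          _ ≤ (2 * L) ^ 2 / (ν * L) := by gcongr
          _ ≤ _ := by rw [div_eq_mul_one_div, mul_comm]; gcongr; exact sq_le_exp_two_mul (by positivity)
      _ = _ := by ring_nf
  have hsq : L ^ 2 / (2 * lam) = 1 / (2 * lam) * L ^ 2 := by ring
  have hlin : L * (L + 1) / (2 * lam) = 1 / (2 * lam) * L ^ 2 + 1 / (2 * lam) * L := by ring
  have hslope : (1 / (2 * lam) + 4) * L = 1 / (2 * lam) * L + 4 * L := by ring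
  have : 0 ≤ 1 / (2 * lam) * L := by positivity
  have : 0 < 1 / lam := by positivity
  rw [abs_le]
  constructor <;> linarith

end resistanceSum

/-- Effective-resistance asymptotics for the coarse-grained birth-and-death chain: if
`R n = ∑_{p=-K⁻-1}^{K⁺} exp((1/(2λ))(p n^{-1/8})(p n^{-1/8}+1) + B_{n,p})` with
uniformly small corrections `|B_{n,p}| ≤ C₀ n^{-1/8}`, `K⁻ ≤ n^{1/8}`, and
`K⁺ n^{-1/8} → ∞`, then
`R n = Θ(1)·(n^{1/8}/(K⁺ n^{-1/8}))·exp((1/(2λ))(K⁺ n^{-1/8})²(1+o(1)))`. -/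
theorem effective_resistance_asymptotics (lam : ℝ) (hlam : 0 < lam)
    (C₀ : ℝ) (hC₀ : 0 < C₀)
    (Kminus Kplus : ℕ → ℕ) (B : ℕ → ℤ → ℝ) (R : ℕ → ℝ)
    (hB : ∀ n : ℕ, ∀ p : ℤ, |B n p| ≤ C₀ * (n : ℝ) ^ (-(1 : ℝ) / 8))
    (hR : ∀ n : ℕ, R n = ∑ p ∈ Finset.Icc (-(Kminus n : ℤ) - 1) ((Kplus n : ℤ)),
        Real.exp ((1 / (2 * lam)) * ((p : ℝ) * (n : ℝ) ^ (-(1 : ℝ) / 8)) *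
            ((p : ℝ) * (n : ℝ) ^ (-(1 : ℝ) / 8) + 1) + B n p))
    (hKminus : ∀ n : ℕ, (Kminus n : ℝ) ≤ (n : ℝ) ^ ((1 : ℝ) / 8))
    (hKplus : Tendsto (fun n : ℕ => (Kplus n : ℝ) * (n : ℝ) ^ (-(1 : ℝ) / 8))
        atTop atTop) :
    ∃ ε : ℕ → ℝ, Tendsto ε atTop (nhds 0) ∧
      ∃ c C : ℝ, 0 < c ∧ 0 < C ∧
        ∀ᶠ n : ℕ in atTop,
          c * ((n : ℝ) ^ ((1 : ℝ) / 8) / ((Kplus n : ℝ) * (n : ℝ) ^ (-(1 : ℝ) / 8)) *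
                Real.exp ((1 / (2 * lam)) *
                  ((Kplus n : ℝ) * (n : ℝ) ^ (-(1 : ℝ) / 8)) ^ 2 * (1 + ε n))) ≤ R n ∧
          R n ≤ C * ((n : ℝ) ^ ((1 : ℝ) / 8) / ((Kplus n : ℝ) * (n : ℝ) ^ (-(1 : ℝ) / 8)) *
                Real.exp ((1 / (2 * lam)) *
                  ((Kplus n : ℝ) * (n : ℝ) ^ (-(1 : ℝ) / 8)) ^ 2 * (1 + ε n))) := by
  set L : ℕ → ℝ := fun n => (Kplus n : ℝ) * (n : ℝ) ^ (-(1 : ℝ) / 8)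
  have hμ : ∀ n : ℕ, (n : ℝ) ^ ((1 : ℝ) / 8) = ((n : ℝ) ^ (-(1 : ℝ) / 8))⁻¹ := fun n => by
    rw [neg_div, rpow_neg n.cast_nonneg, inv_inv]
  have hlarge : ∀ᶠ n : ℕ in atTop, 1 ≤ L n ∧ 1 ≤ n := (hKplus.eventually_ge_atTop 1).and
    (eventually_ge_atTop 1)
  have hlog : ∀ᶠ n : ℕ in atTop, ‖log (R n / ((n : ℝ) ^ ((1 : ℝ) / 8) / L n)) -
      1 / (2 * lam) * L n ^ 2‖ ≤ ‖1 / lam + C₀ + (1 / (2 * lam) + 4) * L n‖ := by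
    filter_upwards [hlarge] with n ⟨hL, hn⟩
    have hν : 0 < (n : ℝ) ^ (-(1 : ℝ) / 8) := rpow_pos_of_pos (by exact_mod_cast hn) _
    have hν1 : (n : ℝ) ^ (-(1 : ℝ) / 8) ≤ 1 :=
      rpow_le_one_of_one_le_of_nonpos (by exact_mod_cast hn) (by norm_num)
    have hslope : 0 ≤ (1 / (2 * lam) + 4) * L n := mul_nonneg (by positivity) (by linarith)
    rw [norm_of_nonneg (add_nonneg (by positivity) hslope), norm_eq_abs, hμ n, hR n]
    exact abs_log_resistanceSum_div_sub_le hlam hν hν1 (hμ n ▸ hKminus n) hL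
      fun p => (hB n p).trans (mul_le_of_le_one_right hC₀.le hν1)
  obtain ⟨ε, hε, hRε⟩ := exists_tendsto_zero_eq_mul_exp (a := 1 / (2 * lam)) (by positivity)
    (Eventually.of_forall fun n => hR n ▸ resistanceSum_pos _ _ (by omega))
    (hlarge.mono fun n ⟨hL, hn⟩ => div_pos (rpow_pos_of_pos (by exact_mod_cast hn) _)
      (by linarith))
    (hlarge.mono fun n ⟨hL, _⟩ => by positivity)
    ((IsBigO.of_bound' hlog).trans_isLittleO
      ((isLittleO_affine_sq_atTop _ _).comp_tendsto hKplus))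
  exact ⟨ε, hε, 1, 1, one_pos, one_pos, hRε.mono fun n hn => by
    simp only [one_mul]; exact ⟨hn.ge, hn.le⟩⟩
end
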